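/- Let K₁ and K₂ be compact Hausdorff topological spaces, each admitting a topological embedding into S³ whose image is a proper subset of S³. Then the disjoint union K₁ ⊕ K₂ admits a topological embedding into S³ whose image is a proper subset of S³. (This abstracts the gluing construction in Case 2 of the paper's proof of the compact-subset proposition, where two copies of S³, each containing one piece, are combined into a single S³ containing both.) -/

import Mathlib

/-- The 3-sphere: unit sphere in `EuclideanSpace ℝ (Fin 4)`, with subspace topology. -/
abbrev Sphere3 : Type := ↥(Metric.sphere (0 : EuclideanSpace ℝ (Fin 4)) 1)

/-!
Stereographic projection from a point missed by the image identifies the complement of that point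
with `ℝ³`, so each `Kᵢ` maps continuously and injectively into `ℝ³`, with bounded image by
compactness. Translating the image of `K₂` far away from that of `K₁` gives a continuous injection
of `K₁ ⊕ K₂` into `ℝ³`; inverse stereographic projection takes it back into `S³` minus a point, and
a continuous injection of a compact space into a Hausdorff space is an embedding.
-/

open Function Metric Module Set Topology

section Stereographic

variable {E : Type*} [NormedAddCommGroup E] [InnerProductSpace ℝ E] {n : ℕ}
  [Fact (finrank ℝ E = n + 1)] {X : Type*} [TopologicalSpace X]

theorem exists_continuous_injective_euclideanSpace_of_notMem_range {g : X → sphere (0 : E) 1}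
    (hg : Continuous g) (hg_inj : Injective g) {p : sphere (0 : E) 1} (hp : p ∉ range g) :
    ∃ φ : X → EuclideanSpace ℝ (Fin n), Continuous φ ∧ Injective φ := by
  have hsource : ∀ x, g x ∈ (stereographic' n p).source := by
    simpa [stereographic'_source] using fun x hx => hp ⟨x, hx⟩
  exact ⟨stereographic' n p ∘ g, (stereographic' n p).continuousOn.comp_continuous hg hsource,
    fun a b hab => hg_inj ((stereographic' n p).injOn (hsource a) (hsource b) hab)⟩

theorem exists_continuous_injective_sphere_of_euclideanSpace {φ : X → EuclideanSpace ℝ (Fin n)}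
    (hφ : Continuous φ) (hφ_inj : Injective φ) (p : sphere (0 : E) 1) :
    ∃ g : X → sphere (0 : E) 1, Continuous g ∧ Injective g ∧ p ∉ range g := by
  have htarget : ∀ x, φ x ∈ (stereographic' n p).target := by simp [stereographic'_target]
  refine ⟨(stereographic' n p).symm ∘ φ,
    (stereographic' n p).symm.continuousOn.comp_continuous hφ htarget,
    fun a b hab => hφ_inj ((stereographic' n p).symm.injOn (htarget a) (htarget b) hab), ?_⟩
  rintro ⟨x, hx⟩
  have hsource := (stereographic' n p).map_target (htarget x)
  rw [stereographic'_source] at hsource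
  exact hsource hx

end Stereographic

theorem exists_continuous_injective_sum_of_isBounded_range
    {E : Type*} [NormedAddCommGroup E] [NormedSpace ℝ E] [Nontrivial E]
    {X Y : Type*} [TopologicalSpace X] [TopologicalSpace Y] {φ₁ : X → E} {φ₂ : Y → E}
    (hφ₁ : Continuous φ₁) (hφ₁_inj : Injective φ₁) (hb₁ : Bornology.IsBounded (range φ₁))
    (hφ₂ : Continuous φ₂) (hφ₂_inj : Injective φ₂) (hb₂ : Bornology.IsBounded (range φ₂)) :
    ∃ f : X ⊕ Y → E, Continuous f ∧ Injective f := by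
  obtain ⟨r₁, hr₁⟩ := isBounded_iff_forall_norm_le.mp hb₁
  obtain ⟨r₂, hr₂⟩ := isBounded_iff_forall_norm_le.mp hb₂
  obtain ⟨v, hv⟩ := NormedSpace.exists_lt_norm ℝ E (r₁ + r₂)
  have hdisjoint : ∀ x y, φ₁ x ≠ φ₂ y + v := by
    intro x y hxy
    have h₁ := hr₁ _ ⟨x, rfl⟩
    have h₂ := hr₂ _ ⟨y, rfl⟩
    have := norm_sub_norm_le v (-φ₂ y)
    rw [norm_neg, sub_neg_eq_add, add_comm, ← hxy] at this
    linarith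
  exact ⟨Sum.elim φ₁ (φ₂ · + v), hφ₁.sumElim (hφ₂.add continuous_const),
    hφ₁_inj.sumElim (add_left_injective v |>.comp hφ₂_inj) hdisjoint⟩

theorem disjoint_union_embeds_in_sphere3_general
    (K₁ : Type) [TopologicalSpace K₁] [CompactSpace K₁]
    (K₂ : Type) [TopologicalSpace K₂] [CompactSpace K₂]
    (h₁ : ∃ g : K₁ → Sphere3, Topology.IsEmbedding g ∧ Set.range g ≠ Set.univ)
    (h₂ : ∃ g : K₂ → Sphere3, Topology.IsEmbedding g ∧ Set.range g ≠ Set.univ) :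
    ∃ g : K₁ ⊕ K₂ → Sphere3, Topology.IsEmbedding g ∧ Set.range g ≠ Set.univ := by
  have : Fact (finrank ℝ (EuclideanSpace ℝ (Fin 4)) = 3 + 1) := ⟨finrank_euclideanSpace_fin⟩
  obtain ⟨g₁, hg₁, hne₁⟩ := h₁
  obtain ⟨g₂, hg₂, hne₂⟩ := h₂
  obtain ⟨p₁, hp₁⟩ := (ne_univ_iff_exists_notMem _).mp hne₁
  obtain ⟨p₂, hp₂⟩ := (ne_univ_iff_exists_notMem _).mp hne₂
  obtain ⟨φ₁, hφ₁, hφ₁_inj⟩ := exists_continuous_injective_euclideanSpace_of_notMem_range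
    (n := 3) hg₁.continuous hg₁.injective hp₁
  obtain ⟨φ₂, hφ₂, hφ₂_inj⟩ := exists_continuous_injective_euclideanSpace_of_notMem_range
    (n := 3) hg₂.continuous hg₂.injective hp₂
  obtain ⟨f, hf, hf_inj⟩ := exists_continuous_injective_sum_of_isBounded_range
    hφ₁ hφ₁_inj (isCompact_range hφ₁).isBounded hφ₂ hφ₂_inj (isCompact_range hφ₂).isBounded
  obtain ⟨g, hg, hg_inj, hp⟩ := exists_continuous_injective_sphere_of_euclideanSpace hf hf_inj p₁
  exact ⟨g, (hg.isClosedEmbedding hg_inj).isEmbedding, (ne_univ_iff_exists_notMem _).mpr ⟨p₁, hp⟩⟩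

/-- If two compact Hausdorff spaces each embed into `S³` with image a proper subset of
`S³`, then their disjoint union embeds into `S³` with image a proper subset of `S³`. -/
theorem disjoint_union_embeds_in_sphere3
    (K₁ : Type) [TopologicalSpace K₁] [CompactSpace K₁] [T2Space K₁]
    (K₂ : Type) [TopologicalSpace K₂] [CompactSpace K₂] [T2Space K₂]
    (h₁ : ∃ g : K₁ → Sphere3, Topology.IsEmbedding g ∧ Set.range g ≠ Set.univ)
    (h₂ : ∃ g : K₂ → Sphere3, Topology.IsEmbedding g ∧ Set.range g ≠ Set.univ) :
    ∃ g : K₁ ⊕ K₂ → Sphere3, Topology.IsEmbedding g ∧ Set.range g ≠ Set.univ :=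
  disjoint_union_embeds_in_sphere3_general K₁ K₂ h₁ h₂
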